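/- There exists a subshift X over the three-letter alphabet {D, U, E} such that for every n ∈ ℕ with n ≥ 1, |F_X(n)| = 2n + 1, and for every n > 6, |P_X(n)| ≥ 2^{⌊n/4⌋}. -/

import Mathlib

/-- The finite word `w` occurs in the biinfinite sequence `x` starting at position `i`. -/
def WordAt {A : Type*} (x : ℤ → A) (i : ℤ) (w : List A) : Prop :=
  ∀ k : ℕ, (hk : k < w.length) → x (i + k) = w.get ⟨k, hk⟩

/-- A subshift: a closed, shift-invariant subset of `A^ℤ` (with the product topology,
`A` carrying the discrete topology). -/
def IsSubshift {A : Type*} [TopologicalSpace A] (X : Set (ℤ → A)) : Prop :=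
  IsClosed X ∧ (fun x : ℤ → A => fun i => x (i + 1)) '' X = X

/-- `w` belongs to the language of `X`: `w` occurs in some point of `X`. -/
def InLang {A : Type*} (X : Set (ℤ → A)) (w : List A) : Prop :=
  ∃ x ∈ X, ∃ i : ℤ, WordAt x i w

/-- The follower set of the word `w` in `X`: all right-infinite sequences `s`
such that `ws` occurs in some point of `X`. -/
def Follower {A : Type*} (X : Set (ℤ → A)) (w : List A) : Set (ℕ → A) :=
  {s | ∃ x ∈ X, ∃ i : ℤ, WordAt x i w ∧ ∀ k : ℕ, x (i + w.length + k) = s k}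

/-- `F_X(n)`: the collection of follower sets of words of length `n` in `X`. -/
def FollowerSets {A : Type*} (X : Set (ℤ → A)) (n : ℕ) : Set (Set (ℕ → A)) :=
  {F | ∃ w : List A, w.length = n ∧ InLang X w ∧ Follower X w = F}

/-- A subshift is sofic iff it has only finitely many follower sets. -/
def Sofic {A : Type*} (X : Set (ℤ → A)) : Prop :=
  {F | ∃ w : List A, InLang X w ∧ Follower X w = F}.Finite

/-- The predecessor set of the word `w` in `X`: all left-infinite sequences `p`
(indexed so that `p k` is the symbol at distance `k+1` to the left of `w`)
such that `pw` occurs in some point of `X`. -/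
def Predecessor {A : Type*} (X : Set (ℤ → A)) (w : List A) : Set (ℕ → A) :=
  {p | ∃ x ∈ X, ∃ i : ℤ, WordAt x i w ∧ ∀ k : ℕ, x (i - 1 - k) = p k}

/-- `P_X(n)`: the collection of predecessor sets of words of length `n` in `X`. -/
def PredecessorSets {A : Type*} (X : Set (ℤ → A)) (n : ℕ) : Set (Set (ℕ → A)) :=
  {P | ∃ w : List A, w.length = n ∧ InLang X w ∧ Predecessor X w = P}

/-- The three-letter alphabet `{D, U, E}`. -/
inductive Letter : Type
  | D : Letter
  | U : Letter
  | E : Letter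
deriving DecidableEq

instance : Fintype Letter :=
  ⟨{Letter.D, Letter.U, Letter.E}, by intro x; cases x <;> simp⟩

instance : TopologicalSpace Letter := ⊥

instance : DiscreteTopology Letter := ⟨rfl⟩

namespace SubEx
open Letter

inductive St : Type where
  | free | phiE | phiU | chi | alp | dd
  | del (j : ℕ) | pii (r : ℕ)
deriving DecidableEq

open St

def step : St → Letter → St
  | free, D => alp
  | free, U => phiU
  | free, E => phiE
  | phiE, D => del 0
  | phiE, U => phiU
  | phiE, E => phiE
  | phiU, D => dd
  | phiU, U => phiU
  | phiU, E => phiE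
  | chi, D => dd
  | chi, U => dd
  | chi, E => phiE
  | alp, D => alp
  | alp, U => chi
  | alp, E => phiE
  | del j, D => del (j+1)
  | del _, U => chi
  | del j, E => pii j
  | pii 0, D => dd
  | pii 0, U => phiU
  | pii 0, E => dd
  | pii (r+1), D => dd
  | pii (r+1), U => pii r
  | pii (r+1), E => pii r
  | dd, _ => dd

def runFrom (q : St) (w : List Letter) : St := w.foldl step q

abbrev runW (w : List Letter) : St := runFrom St.free w

lemma runFrom_append (q : St) (w v : List Letter) :
    runFrom q (w ++ v) = runFrom (runFrom q w) v := by
  simp [runFrom, List.foldl_append]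

@[simp] lemma runFrom_nil (q : St) : runFrom q [] = q := rfl

@[simp] lemma runFrom_cons (q : St) (a : Letter) (l : List Letter) :
    runFrom q (a :: l) = runFrom (step q a) l := rfl

@[simp] lemma runFrom_dead (w : List Letter) : runFrom dd w = dd := by
  induction w with
  | nil => rfl
  | cons a l ih => simpa [step] using ih

lemma step_ne_free (q : St) (a : Letter) : step q a ≠ free := by
  cases q <;> cases a <;> simp [step] <;>
    (try (rename_i r; cases r <;> simp [step]))

lemma runW_ne_free {w : List Letter} (hw : w ≠ []) : runW w ≠ free := by
  induction w using List.reverseRecOn with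
  | nil => exact absurd rfl hw
  | append_singleton l a _ =>
    rw [runW, runFrom_append]
    exact step_ne_free _ _

lemma alive_prefix {u v : List Letter} (h : runW (u ++ v) ≠ dd) : runW u ≠ dd := by
  intro hu
  rw [runW, runFrom_append] at h
  rw [runW] at hu
  rw [hu] at h
  exact h (runFrom_dead v)

/-- classification of alive results of a `D` step -/
lemma step_D_class {b : St} (h : step b D ≠ dd) : step b D = alp ∨ ∃ j, step b D = del j := by
  cases b <;> simp [step] at h ⊢
  · rename_i r; cases r <;> simp [step] at h
lemma step_U_class {b : St} (h : step b U ≠ dd) :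
    step b U = phiU ∨ step b U = chi ∨ ∃ r, step b U = pii r := by
  cases b <;> simp [step] at h ⊢
  · rename_i r; cases r <;> simp [step]
lemma step_E_class {b : St} (h : step b E ≠ dd) :
    step b E = phiE ∨ ∃ r, step b E = pii r := by
  cases b <;> simp [step] at h ⊢
  · rename_i r; cases r <;> simp [step] at h ⊢

def sim (b : St) : St → Prop
  | free => b ≠ dd
  | phiE => b = phiE ∨ ∃ r, b = pii r
  | phiU => b = phiU ∨ b = chi ∨ ∃ r, b = pii r
  | alp => b = alp ∨ ∃ j, b = del j
  | chi => b = chi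
  | del j => b = del j
  | pii r => b = pii r
  | dd => False

lemma sim_step {b s : St} (a : Letter) (h : sim b s) (hb : step b a ≠ dd) :
    sim (step b a) (step s a) := by
  cases s with
  | dd => exact h.elim
  | free =>
    cases a with
    | D => exact step_D_class hb
    | U => exact step_U_class hb
    | E => exact step_E_class hb
  | phiE =>
    rcases h with h | ⟨r, h⟩ <;> subst h
    · cases a with
      | D => simp [step, sim]
      | U => exact step_U_class hb
      | E => exact step_E_class hb
    · cases a with
      | D => cases r <;> simp [step] at hb
      | U => exact step_U_class hb
      | E => exact step_E_class hb
  | phiU =>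
    rcases h with h | h | ⟨r, h⟩ <;> subst h
    · cases a with
      | D => simp [step] at hb
      | U => exact step_U_class hb
      | E => exact step_E_class hb
    · cases a with
      | D => simp [step] at hb
      | U => simp [step] at hb
      | E => exact step_E_class hb
    · cases a with
      | D => cases r <;> simp [step] at hb
      | U => exact step_U_class hb
      | E => exact step_E_class hb
  | alp =>
    rcases h with h | ⟨j, h⟩ <;> subst h
    · cases a with
      | D => simp [step, sim]
      | U => simp [step, sim]
      | E => exact step_E_class hb
    · cases a with
      | D => simp [step, sim]
      | U => simp [step, sim]
      | E => exact step_E_class hb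
  | chi =>
    subst h
    cases a with
    | D => simp [step] at hb
    | U => simp [step] at hb
    | E => exact step_E_class hb
  | del j =>
    subst h
    cases a <;> simp [step, sim]
  | pii r =>
    subst h
    cases r <;> cases a <;> simp [step, sim] at hb ⊢

lemma sim_ne_dd {b s : St} (h : sim b s) : s ≠ dd := by
  intro hs; subst hs; exact h

lemma sim_run {b s : St} (v : List Letter) (h : sim b s) (hb : runFrom b v ≠ dd) :
    sim (runFrom b v) (runFrom s v) := by
  induction v generalizing b s with
  | nil => exact h
  | cons a l ih =>
    have hba : step b a ≠ dd := by
      intro h'; rw [runFrom_cons, h'] at hb; exact hb (runFrom_dead l)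
    exact ih (sim_step a h hba) (by rwa [runFrom_cons] at hb)

lemma alive_suffix {b : St} {v : List Letter} (hb : b ≠ dd) (h : runFrom b v ≠ dd) :
    runW v ≠ dd := by
  have : sim b free := hb
  exact sim_ne_dd (sim_run v this h)

lemma alive_infix {u v z : List Letter} (h : runW (u ++ v ++ z) ≠ dd) : runW v ≠ dd := by
  have h1 : runW (u ++ v) ≠ dd := alive_prefix (by rwa [List.append_assoc] at h)
  rw [runW, runFrom_append] at h1
  exact alive_suffix (fun hf => h1 (by rw [hf]; exact runFrom_dead v)) h1

lemma sim_context (u v : List Letter) (h : runW (u ++ v) ≠ dd) :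
    sim (runW (u ++ v)) (runW v) := by
  rw [runW, runFrom_append] at h ⊢
  exact sim_run v (show sim (runFrom free u) free from
    fun hf => h (by rw [hf]; simp)) h

end SubEx
namespace SubEx
open Letter St

/-- the window of `x` of length `n` starting at `i` -/
def window (x : ℤ → Letter) (i : ℤ) (n : ℕ) : List Letter :=
  List.ofFn fun k : Fin n => x (i + k)

@[simp] lemma window_length (x : ℤ → Letter) (i : ℤ) (n : ℕ) :
    (window x i n).length = n := by simp [window]

lemma window_get (x : ℤ → Letter) (i : ℤ) (n : ℕ) (k : Fin n)
    (hk : k.1 < (window x i n).length) :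
    (window x i n).get ⟨k.1, hk⟩ = x (i + k.1) := by
  simp [window]

lemma window_congr {x y : ℤ → Letter} {i j : ℤ} {n : ℕ}
    (h : ∀ k : ℕ, k < n → x (i + k) = y (j + k)) : window x i n = window y j n := by
  apply List.ext_get (by simp)
  intro t h1 h2
  simp only [window, List.get_ofFn, Fin.cast_mk]
  exact h t (by simpa using h1)

lemma window_add (x : ℤ → Letter) (i : ℤ) (m n : ℕ) :
    window x i (m + n) = window x i m ++ window x (i + m) n := by
  rw [window, List.ofFn_add]
  congr 1
  apply List.ext_get (by simp)
  intro t h1 h2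
  simp only [window, List.get_ofFn, Fin.cast_mk, Fin.natAdd]
  congr 1
  push_cast
  simp
  ring

/-- The subshift: every finite window must be alive for the automaton. -/
def XS : Set (ℤ → Letter) := {x | ∀ (i : ℤ) (n : ℕ), runW (window x i n) ≠ dd}

lemma isClosed_XS : IsClosed XS := by
  have : XS = ⋂ (i : ℤ) (n : ℕ),
      (fun x : ℤ → Letter => fun k : Fin n => x (i + k)) ⁻¹'
        {v : Fin n → Letter | runW (List.ofFn v) ≠ dd} := by
    ext x
    simp [XS, window, Set.mem_iInter]
  rw [this]
  refine isClosed_iInter fun i => isClosed_iInter fun n => ?_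
  have hc : Continuous (fun x : ℤ → Letter => fun k : Fin n => x (i + k)) :=
    continuous_pi fun k => continuous_apply _
  exact (isClosed_discrete _).preimage hc

lemma shift_XS : (fun x : ℤ → Letter => fun i => x (i + 1)) '' XS = XS := by
  have key : ∀ (x : ℤ → Letter) (i : ℤ) (n : ℕ),
      window (fun j => x (j + 1)) i n = window x (i + 1) n := by
    intro x i n
    exact window_congr fun k hk => by congr 1; ring
  ext y
  constructor
  · rintro ⟨x, hx, rfl⟩
    intro i n
    rw [key]
    exact hx _ _
  · intro hy
    refine ⟨fun j => y (j - 1), ?_, ?_⟩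
    · intro i n
      have : window (fun j => y (j - 1)) i n = window y (i - 1) n :=
        window_congr fun k hk => by congr 1; ring
      rw [this]
      exact hy _ _
    · funext i
      simp

lemma isSubshift_XS : IsSubshift XS := ⟨isClosed_XS, shift_XS⟩

end SubEx
namespace SubEx
open Letter St

/-! ### Infinite sequences and their finite prefixes -/

def pre (s : ℕ → Letter) (n : ℕ) : List Letter := List.ofFn fun k : Fin n => s k

@[simp] lemma pre_length (s : ℕ → Letter) (n : ℕ) : (pre s n).length = n := by simp [pre]

@[simp] lemma pre_zero (s : ℕ → Letter) : pre s 0 = [] := rfl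

lemma pre_get (s : ℕ → Letter) (n t : ℕ) (ht : t < (pre s n).length) :
    (pre s n).get ⟨t, ht⟩ = s t := by simp [pre]

def consS (a : Letter) (s : ℕ → Letter) : ℕ → Letter
  | 0 => a
  | (k+1) => s k

def constS (a : Letter) : ℕ → Letter := fun _ => a

lemma pre_consS (a : Letter) (s : ℕ → Letter) (n : ℕ) :
    pre (consS a s) (n + 1) = a :: pre s n := by
  apply List.ext_get (by simp)
  intro t h1 h2
  rcases t with _ | t <;> simp [pre, consS, List.get]

lemma pre_constS (a : Letter) (n : ℕ) : pre (constS a) n = List.replicate n a := by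
  apply List.ext_get (by simp)
  intro t h1 h2
  simp [pre, constS]

def aliveS (q : St) (s : ℕ → Letter) : Prop := ∀ n, runFrom q (pre s n) ≠ dd

lemma aliveS_ne_dd {q : St} {s : ℕ → Letter} (h : aliveS q s) : q ≠ dd := h 0

lemma aliveS_consS {q : St} {a : Letter} {s : ℕ → Letter} :
    aliveS q (consS a s) ↔ q ≠ dd ∧ aliveS (step q a) s := by
  constructor
  · intro h
    refine ⟨h 0, fun n => ?_⟩
    have := h (n + 1)
    rwa [pre_consS, runFrom_cons] at this
  · rintro ⟨h0, h⟩ n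
    rcases n with _ | n
    · simpa using h0
    · rw [pre_consS, runFrom_cons]
      exact h n

lemma pre_succ (s : ℕ → Letter) (n : ℕ) : pre s (n + 1) = (pre s n).concat (s n) := by
  rw [pre, List.ofFn_succ']
  rfl

/-- invariant principle for staying alive -/
lemma aliveS_of_inv (I : St → Prop) {q : St} {s : ℕ → Letter}
    (hd : ¬ I dd) (hq : I q) (hstep : ∀ q' n, I q' → I (step q' (s n))) :
    aliveS q s := by
  have key : ∀ n, I (runFrom q (pre s n)) := by
    intro n
    induction n with
    | zero => simpa using hq
    | succ n ih =>
      rw [pre_succ, List.concat_eq_append, runFrom_append]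
      simpa using hstep _ n ih
  intro n hn
  exact hd (hn ▸ key n)

/-! ### runs on constant blocks -/

lemma run_alp_repD (p : ℕ) : runFrom alp (List.replicate p D) = alp := by
  induction p with
  | zero => rfl
  | succ p ih => simpa [step, List.replicate_succ] using ih

lemma run_free_repD (p : ℕ) (hp : 1 ≤ p) : runFrom free (List.replicate p D) = alp := by
  rcases p with _ | p
  · omega
  · simpa [step, List.replicate_succ] using run_alp_repD p

lemma run_phiU_repU (p : ℕ) : runFrom phiU (List.replicate p U) = phiU := by
  induction p with
  | zero => rfl
  | succ p ih => simpa [step, List.replicate_succ] using ih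

lemma run_free_repU (p : ℕ) (hp : 1 ≤ p) : runFrom free (List.replicate p U) = phiU := by
  rcases p with _ | p
  · omega
  · simpa [step, List.replicate_succ] using run_phiU_repU p

lemma run_phiE_repE (p : ℕ) : runFrom phiE (List.replicate p E) = phiE := by
  induction p with
  | zero => rfl
  | succ p ih => simpa [step, List.replicate_succ] using ih

lemma run_free_repE (p : ℕ) (hp : 1 ≤ p) : runFrom free (List.replicate p E) = phiE := by
  rcases p with _ | p
  · omega
  · simpa [step, List.replicate_succ] using run_phiE_repE p

lemma run_del_repD (j p : ℕ) : runFrom (del j) (List.replicate p D) = del (j + p) := by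
  induction p generalizing j with
  | zero => simp
  | succ p ih =>
    rw [List.replicate_succ, runFrom_cons]
    simp only [step]
    rw [ih]
    congr 1
    omega

/-- the padding letter used to extend a word to the left -/
def padFor (w : List Letter) : Letter := if w.head? = some D then D else U

lemma pad_absorb (w : List Letter) (hw : w ≠ []) (p : ℕ) (z : List Letter) :
    runW (List.replicate p (padFor w) ++ (w ++ z)) = runW (w ++ z) := by
  rcases p with _ | p
  · simp
  rcases w with _ | ⟨b, t⟩
  · exact absurd rfl hw
  rw [runW, runFrom_append]
  have h1 : 1 ≤ p + 1 := by omega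
  by_cases hb : b = D
  · subst hb
    rw [show padFor (D :: t) = D from by simp [padFor], run_free_repD _ h1]
    simp [step]
  · rw [show padFor (b :: t) = U from by simp [padFor, hb], run_free_repU _ h1]
    cases b <;> simp [step] at hb ⊢

end SubEx
namespace SubEx
open Letter St

lemma mem_XS_of_spec (x : ℤ → Letter) (L : ℕ) (T : ℕ → List Letter)
    (hlen : ∀ m, (T m).length = m + L + m)
    (hget : ∀ m (t : ℕ) (ht : t < (T m).length), (T m).get ⟨t, ht⟩ = x ((t : ℤ) - m))
    (hT : ∀ m, runW (T m) ≠ dd) : x ∈ XS := by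
  intro i n
  set m : ℕ := n + i.toNat + (-i).toNat with hm
  have hi1 : 0 ≤ i + (m : ℤ) := by
    push_cast [hm]
    omega
  set d : ℕ := (i + m).toNat with hd
  have hdi : (d : ℤ) = i + m := Int.toNat_of_nonneg hi1
  have hdn : d + n ≤ (T m).length := by
    rw [hlen]
    have : (d : ℤ) + n ≤ (m : ℤ) + L + m := by
      rw [hdi]
      push_cast [hm]
      omega
    exact_mod_cast this
  have heq : window x i n = ((T m).drop d).take n := by
    apply List.ext_get
    · simp [hlen]
      omega
    · intro t h1 h2
      have ht1 : t < n := by simpa using h1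
      have ht2 : d + t < (T m).length := by omega
      simp only [List.get_eq_getElem, List.getElem_take, List.getElem_drop,
        window, List.getElem_ofFn]
      have hg := hget m (d + t) ht2
      simp only [List.get_eq_getElem] at hg
      rw [hg]
      congr 1
      rw [show ((d + t : ℕ) : ℤ) = (d : ℤ) + t by push_cast; ring, hdi]
      ring
  rw [heq]
  have hsplit : runW ((T m).take d ++ ((T m).drop d).take n ++ ((T m).drop d).drop n) ≠ dd := by
    rw [List.append_assoc, List.take_append_drop, List.take_append_drop]
    exact hT m
  exact alive_infix hsplit

end SubEx
namespace SubEx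
open Letter St

def catWS (w : List Letter) (s : ℕ → Letter) : ℕ → Letter :=
  fun m => if h : m < w.length then w.get ⟨m, h⟩ else s (m - w.length)

lemma pre_catWS_small (w : List Letter) (s : ℕ → Letter) {m : ℕ} (hm : m ≤ w.length) :
    pre (catWS w s) m = w.take m := by
  apply List.ext_get (by simp; omega)
  intro t h1 h2
  have ht : t < m := by simpa using h1
  have ht2 : t < w.length := by omega
  rw [pre_get]
  simp only [List.get_eq_getElem, List.getElem_take]
  simp [catWS, ht2]

lemma pre_catWS_big (w : List Letter) (s : ℕ → Letter) (k : ℕ) :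
    pre (catWS w s) (w.length + k) = w ++ pre s k := by
  apply List.ext_get (by simp)
  intro t h1 h2
  rw [pre_get]
  rcases Nat.lt_or_ge t w.length with ht | ht
  · simp only [List.get_eq_getElem]
    rw [List.getElem_append_left ht]
    simp [catWS, ht]
  · simp only [List.get_eq_getElem]
    rw [List.getElem_append_right ht]
    simp only [catWS]
    rw [dif_neg (by omega)]
    simp [pre]

lemma alive_catWS {w : List Letter} {s : ℕ → Letter}
    (hal : runW w ≠ dd) (hs : aliveS (runW w) s) (m : ℕ) :
    runW (pre (catWS w s) m) ≠ dd := by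
  rcases le_or_gt m w.length with hm | hm
  · rw [pre_catWS_small w s hm]
    exact alive_prefix (by rw [List.take_append_drop]; exact hal)
  · have hm2 : m = w.length + (m - w.length) := by omega
    rw [hm2, pre_catWS_big, runW, runFrom_append]
    exact hs _

def fpoint (w : List Letter) (s : ℕ → Letter) : ℤ → Letter :=
  fun j => if j < 0 then padFor w else catWS w s j.toNat

lemma fpoint_nonneg (w : List Letter) (s : ℕ → Letter) (k : ℕ) :
    fpoint w s (k : ℤ) = catWS w s k := by
  simp [fpoint]

lemma fpoint_wordAt (w : List Letter) (s : ℕ → Letter) : WordAt (fpoint w s) 0 w := by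
  intro k hk
  have h0 : (0 : ℤ) + (k : ℤ) = (k : ℤ) := by ring
  rw [h0, fpoint_nonneg]
  simp [catWS, hk]

lemma fpoint_tail (w : List Letter) (s : ℕ → Letter) (k : ℕ) :
    fpoint w s (0 + (w.length : ℤ) + k) = s k := by
  have h0 : (0 : ℤ) + (w.length : ℤ) + k = ((w.length + k : ℕ) : ℤ) := by push_cast; ring
  rw [h0, fpoint_nonneg]
  simp only [catWS]
  rw [dif_neg (by omega)]
  congr 1
  omega

lemma fpoint_mem {w : List Letter} {s : ℕ → Letter} (hw : w ≠ [])
    (hs : aliveS (runW w) s) : fpoint w s ∈ XS := by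
  have hal : runW w ≠ dd := by
    intro h
    have := hs 0
    rw [h] at this
    exact this rfl
  apply mem_XS_of_spec _ w.length
    (fun m => List.replicate m (padFor w) ++ pre (catWS w s) (w.length + m))
  · intro m; simp; ring
  · intro m t ht
    rcases Nat.lt_or_ge t m with h | h
    · simp only [List.get_eq_getElem]
      rw [List.getElem_append_left (by simpa using h)]
      simp only [List.getElem_replicate]
      rw [fpoint, if_pos (by omega)]
    · simp only [List.get_eq_getElem]
      rw [List.getElem_append_right (by simpa using h)]
      have h2 : t - m < (pre (catWS w s) (w.length + m)).length := by
        simp at ht ⊢; omega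
      simp only [List.length_replicate]
      have := pre_get (catWS w s) (w.length + m) (t - m) h2
      simp only [List.get_eq_getElem] at this
      rw [this, fpoint, if_neg (by omega)]
      congr 1
      omega
  · intro m
    rw [pre_catWS_big, pad_absorb w hw, runW, runFrom_append]
    exact hs m

lemma wordAt_window {x : ℤ → Letter} {i : ℤ} {w : List Letter} (h : WordAt x i w) :
    window x i w.length = w := by
  apply List.ext_get (by simp)
  intro t h1 h2
  have ht : t < w.length := h2
  rw [window_get x i w.length ⟨t, by simpa using h1⟩ h1]
  exact h t ht

lemma follower_eq {w : List Letter} (hw : w ≠ []) :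
    Follower XS w = {s | aliveS (runW w) s} := by
  ext s
  constructor
  · rintro ⟨x, hx, i, hword, htail⟩ n
    have hwin : window x i (w.length + n) = w ++ pre s n := by
      rw [window_add]
      congr 1
      · exact wordAt_window hword
      · apply List.ext_get (by simp)
        intro t h1 h2
        have ht : t < n := by simpa using h1
        rw [window_get x _ n ⟨t, by simpa using h1⟩ h1, pre_get]
        exact htail t
    have := hx i (w.length + n)
    rw [hwin, runW, runFrom_append] at this
    exact this
  · intro hs
    exact ⟨fpoint w s, fpoint_mem hw hs, 0, fpoint_wordAt w s, fun k => fpoint_tail w s k⟩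

/-- every alive state admits an alive continuation -/
lemma exists_aliveS {q : St} (hq : q ≠ dd) : ∃ s, aliveS q s := by
  cases q with
  | dd => exact absurd rfl hq
  | free =>
    exact ⟨constS U, aliveS_of_inv (fun q' => q' = free ∨ q' = phiU) (by simp) (Or.inl rfl)
      (by rintro q' n (rfl | rfl) <;> simp [constS, step])⟩
  | phiE =>
    exact ⟨constS U, aliveS_of_inv (fun q' => q' = phiE ∨ q' = phiU) (by simp) (Or.inl rfl)
      (by rintro q' n (rfl | rfl) <;> simp [constS, step])⟩
  | phiU =>
    exact ⟨constS U, aliveS_of_inv (fun q' => q' = phiU) (by simp) rfl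
      (by rintro q' n rfl; simp [constS, step])⟩
  | chi =>
    refine ⟨consS E (constS U), ?_⟩
    rw [aliveS_consS]
    refine ⟨by simp, ?_⟩
    exact aliveS_of_inv (fun q' => q' = phiE ∨ q' = phiU) (by simp) (Or.inl rfl)
      (by rintro q' n (rfl | rfl) <;> simp [constS, step])
  | alp =>
    refine ⟨consS U (constS E), ?_⟩
    rw [aliveS_consS]
    refine ⟨by simp, ?_⟩
    exact aliveS_of_inv (fun q' => q' = chi ∨ q' = phiE) (by simp) (Or.inl rfl)
      (by rintro q' n (rfl | rfl) <;> simp [constS, step])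
  | del j =>
    refine ⟨consS U (constS E), ?_⟩
    rw [aliveS_consS]
    refine ⟨by simp, ?_⟩
    exact aliveS_of_inv (fun q' => q' = chi ∨ q' = phiE) (by simp) (Or.inl (by simp [step]))
      (by rintro q' n (rfl | rfl) <;> simp [constS, step])
  | pii r =>
    refine ⟨constS U, aliveS_of_inv (fun q' => (∃ k, q' = pii k) ∨ q' = phiU) (by simp)
      (Or.inl ⟨r, rfl⟩) ?_⟩
    rintro q' n (⟨k, rfl⟩ | rfl)
    · cases k <;> simp [constS, step]
    · simp [constS, step]

lemma aliveS_piiU (r : ℕ) : aliveS (pii r) (constS U) := by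
  refine aliveS_of_inv (fun q' => (∃ k, q' = pii k) ∨ q' = phiU) (by simp) (Or.inl ⟨r, rfl⟩) ?_
  rintro q' n (⟨k, rfl⟩ | rfl)
  · cases k <;> simp [constS, step]
  · simp [constS, step]

lemma inLang_iff {w : List Letter} (hw : w ≠ []) : InLang XS w ↔ runW w ≠ dd := by
  constructor
  · rintro ⟨x, hx, i, hword⟩
    have := hx i w.length
    rwa [wordAt_window hword] at this
  · intro hal
    obtain ⟨s, hs⟩ := exists_aliveS hal
    exact ⟨fpoint w s, fpoint_mem hw hs, 0, fpoint_wordAt w s⟩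

end SubEx
namespace SubEx
open Letter St

def pwin (p : ℕ → Letter) (m : ℕ) : List Letter := (pre p m).reverse

@[simp] lemma pwin_length (p : ℕ → Letter) (m : ℕ) : (pwin p m).length = m := by simp [pwin]

@[simp] lemma pwin_zero (p : ℕ → Letter) : pwin p 0 = [] := rfl

lemma pwin_succ (p : ℕ → Letter) (m : ℕ) : pwin p (m + 1) = p m :: pwin p m := by
  rw [pwin, pre_succ, List.concat_eq_append, List.reverse_append]
  rfl

lemma pwin_get (p : ℕ → Letter) (m t : ℕ) (ht : t < (pwin p m).length) :
    (pwin p m).get ⟨t, ht⟩ = p (m - 1 - t) := by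
  simp only [pwin, List.get_eq_getElem, List.getElem_reverse]
  have h2 : (pre p m).length - 1 - t < (pre p m).length := by
    simp at ht ⊢; omega
  have := pre_get p m ((pre p m).length - 1 - t) h2
  simp only [List.get_eq_getElem] at this
  rw [this]
  congr 1
  simp

lemma pwin_split (p : ℕ → Letter) {m m' : ℕ} (h : m ≤ m') :
    ∃ u, pwin p m' = u ++ pwin p m := by
  induction m' with
  | zero =>
    have : m = 0 := by omega
    exact ⟨[], by simp [this]⟩
  | succ m' ih =>
    rcases Nat.lt_or_ge m (m' + 1) with h2 | h2
    · obtain ⟨u, hu⟩ := ih (by omega)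
      exact ⟨p m' :: u, by rw [pwin_succ, hu]; rfl⟩
    · have : m = m' + 1 := by omega
      exact ⟨[], by simp [this]⟩

/-- the predecessor characterization, easy direction ingredients -/
lemma pred_subset {w : List Letter} (hw : w ≠ []) :
    Predecessor XS w ⊆ {p | ∀ m, runW (pwin p m ++ w) ≠ dd} := by
  rintro p ⟨x, hx, i, hword, hleft⟩ m
  have hwin : window x (i - m) (m + w.length) = pwin p m ++ w := by
    rw [window_add]
    congr 1
    · apply List.ext_get (by simp)
      intro t h1 h2
      have ht : t < m := by simpa using h1
      rw [window_get x _ m ⟨t, by simpa using h1⟩ h1]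
      rw [pwin_get p m t (by simpa using ht)]
      rw [← hleft (m - 1 - t)]
      congr 1
      push_cast
      omega
    · have : i - m + m = i := by ring
      rw [this]
      exact wordAt_window hword
  have := hx (i - m) (m + w.length)
  rwa [hwin] at this

/-- the point used for the predecessor converse -/
def ppoint (p : ℕ → Letter) (w : List Letter) (s : ℕ → Letter) : ℤ → Letter :=
  fun j => if j < 0 then p (-j - 1).toNat else catWS w s j.toNat

lemma ppoint_mem {p : ℕ → Letter} {w : List Letter} {s : ℕ → Letter} (hw : w ≠ [])
    (halive : ∀ m, runFrom (runW (pwin p m ++ w)) (pre s m) ≠ dd) :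
    ppoint p w s ∈ XS := by
  apply mem_XS_of_spec _ w.length
    (fun m => pwin p m ++ pre (catWS w s) (w.length + m))
  · intro m; simp; ring
  · intro m t ht
    rcases Nat.lt_or_ge t m with h | h
    · simp only [List.get_eq_getElem]
      rw [List.getElem_append_left (by simpa using h)]
      have h2 : t < (pwin p m).length := by simpa using h
      have := pwin_get p m t h2
      simp only [List.get_eq_getElem] at this
      rw [this, ppoint, if_pos (by omega)]
      congr 1
      omega
    · simp only [List.get_eq_getElem]
      rw [List.getElem_append_right (by simpa using h)]
      have h2 : t - m < (pre (catWS w s) (w.length + m)).length := by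
        simp at ht ⊢; omega
      have := pre_get (catWS w s) (w.length + m) (t - m) h2
      simp only [List.get_eq_getElem] at this
      simp only [pwin_length]
      rw [this, ppoint, if_neg (by omega)]
      congr 1
      omega
  · intro m
    rw [pre_catWS_big, ← List.append_assoc, runW, runFrom_append]
    exact halive m

lemma ppoint_wordAt (p : ℕ → Letter) (w : List Letter) (s : ℕ → Letter) :
    WordAt (ppoint p w s) 0 w := by
  intro k hk
  have h0 : (0 : ℤ) + (k : ℤ) = (k : ℤ) := by ring
  rw [h0, ppoint, if_neg (by omega)]
  simp only [catWS, Int.toNat_natCast]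
  rw [dif_pos hk]

lemma ppoint_left (p : ℕ → Letter) (w : List Letter) (s : ℕ → Letter) (k : ℕ) :
    ppoint p w s (0 - 1 - k) = p k := by
  rw [ppoint, if_pos (by omega)]
  congr 1
  omega

end SubEx
namespace SubEx
open Letter St

lemma alive_phi_constU {q : St} (h : q = phiE ∨ q = phiU) : aliveS q (constS U) := by
  refine aliveS_of_inv (fun q' => q' = phiE ∨ q' = phiU) (by simp) h ?_
  rintro q' n (rfl | rfl) <;> simp [constS, step]

lemma alive_chiE_constE {q : St} (h : q = chi ∨ q = phiE) : aliveS q (constS E) := by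
  refine aliveS_of_inv (fun q' => q' = chi ∨ q' = phiE) (by simp) h ?_
  rintro q' n (rfl | rfl) <;> simp [constS, step]

lemma predecessor_eq {w : List Letter} (hw : w ≠ []) :
    Predecessor XS w = {p | ∀ m, runW (pwin p m ++ w) ≠ dd} := by
  apply Set.Subset.antisymm (pred_subset hw)
  intro p hp
  set q : ℕ → St := fun m => runW (pwin p m ++ w) with hq
  have hne : ∀ m, q m ≠ dd := hp
  have hnefree : ∀ m, q m ≠ free := fun m => runW_ne_free (by simp [List.append_eq_nil_iff, hw])
  have hsim0 : ∀ m, sim (q m) (runW w) := fun m => by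
    have h2 := sim_context (pwin p m) w (hp m)
    exact h2
  have hsim2 : ∀ {m m' : ℕ}, m ≤ m' → sim (q m') (q m) := by
    intro m m' h
    obtain ⟨u, hu⟩ := pwin_split p h
    have heq : pwin p m' ++ w = u ++ (pwin p m ++ w) := by rw [hu, List.append_assoc]
    have h3 := sim_context u (pwin p m ++ w) (by rw [← heq]; exact hp m')
    rw [hq]
    simp only
    rw [heq]
    exact h3
  have h00 : q 0 = runW w := by simp [hq]
  suffices hs : ∃ s : ℕ → Letter, ∀ m, aliveS (q m) s by
    obtain ⟨s, hs⟩ := hs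
    have hs' : ∀ m, runFrom (runW (pwin p m ++ w)) (pre s m) ≠ dd := fun m => hs m m
    exact ⟨ppoint p w s, ppoint_mem hw hs', 0, ppoint_wordAt p w s,
      fun k => ppoint_left p w s k⟩
  by_cases hchi : ∃ M, q M = chi
  · obtain ⟨M, hM⟩ := hchi
    have hcase : ∀ m, q m = chi ∨ q m = phiU := by
      intro m
      rcases le_total m M with h | h
      · have h2 := hsim2 h
        rw [hM] at h2
        -- h2 : sim chi (q m)
        rcases hqm : q m with _ | _ | _ | _ | _ | _ | j | r <;> rw [hqm] at h2 <;>
          simp [sim] at h2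
        · exact absurd hqm (hnefree m)
        · exact Or.inr rfl
        · exact Or.inl rfl
      · have h2 := hsim2 h
        rw [hM] at h2
        exact Or.inl h2
    refine ⟨consS E (constS U), fun m => ?_⟩
    rw [aliveS_consS]
    rcases hcase m with h | h <;> rw [h] <;>
      exact ⟨by simp, by simp only [step]; exact alive_phi_constU (Or.inl rfl)⟩
  · push_neg at hchi
    rcases hq0 : runW w with _ | _ | _ | _ | _ | _ | j | r
    · exact absurd hq0 (runW_ne_free hw)
    · -- phiE
      refine ⟨constS U, fun m => ?_⟩
      have h2 := hsim0 m
      rw [hq0] at h2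
      rcases h2 with h2 | ⟨r, h2⟩ <;> rw [h2]
      · exact alive_phi_constU (Or.inl rfl)
      · exact aliveS_piiU r
    · -- phiU
      refine ⟨constS U, fun m => ?_⟩
      have h2 := hsim0 m
      rw [hq0] at h2
      rcases h2 with h2 | h2 | ⟨r, h2⟩
      · rw [h2]; exact alive_phi_constU (Or.inr rfl)
      · exact absurd h2 (hchi m)
      · rw [h2]; exact aliveS_piiU r
    · -- chi
      exact absurd (h00.trans hq0) (hchi 0)
    · -- alp
      refine ⟨consS U (constS E), fun m => ?_⟩
      have h2 := hsim0 m
      rw [hq0] at h2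
      rw [aliveS_consS]
      rcases h2 with h2 | ⟨j, h2⟩ <;> rw [h2] <;>
        exact ⟨by simp, by simp only [step]; exact alive_chiE_constE (Or.inl rfl)⟩
    · -- dd
      exact absurd (h00.trans hq0) (hne 0)
    · -- del j
      refine ⟨consS U (constS E), fun m => ?_⟩
      have h2 := hsim0 m
      rw [hq0] at h2
      rw [h2, aliveS_consS]
      exact ⟨by simp, by simp only [step]; exact alive_chiE_constE (Or.inl rfl)⟩
    · -- pii r
      refine ⟨constS U, fun m => ?_⟩
      have h2 := hsim0 m
      rw [hq0] at h2
      rw [h2]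
      exact aliveS_piiU r

end SubEx
namespace SubEx
open Letter St

def cost : St → ℕ
  | free => 0
  | phiE => 1
  | phiU => 1
  | alp => 1
  | chi => 2
  | dd => 0
  | del j => j + 2
  | pii r => r + 3

lemma cost_step {q : St} (a : Letter) (h : step q a ≠ dd) : cost (step q a) ≤ cost q + 1 := by
  rcases q with _ | _ | _ | _ | _ | _ | j | r
  case pii => cases r <;> cases a <;> simp [step, cost] at h ⊢ <;> try omega
  all_goals cases a <;> simp [step, cost] at h ⊢ <;> try omega

lemma cost_run : ∀ (l : List Letter) (q : St), runFrom q l ≠ dd →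
    cost (runFrom q l) ≤ cost q + l.length := by
  intro l
  induction l with
  | nil => intro q _; simp
  | cons a t ih =>
    intro q h
    rw [runFrom_cons] at h ⊢
    have hstep : step q a ≠ dd := by
      intro h2; rw [h2] at h; exact h (runFrom_dead t)
    have := ih (step q a) h
    have := cost_step a hstep
    simp only [List.length_cons]
    omega

/-- the set of states of words of length `n` -/
def SnF (n : ℕ) : Finset St :=
  (({phiE, phiU, alp} : Finset St) ∪ (if 2 ≤ n then {chi} else ∅))
    ∪ ((Finset.range (n-1)).image del ∪ (Finset.range (n-2)).image pii)

lemma state_mem_SnF {w : List Letter} (hw : w ≠ []) (hal : runW w ≠ dd) :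
    runW w ∈ SnF w.length := by
  have hc := cost_run w free hal
  change cost (runW w) ≤ _ at hc
  have hf := runW_ne_free hw
  have hlen : 1 ≤ w.length := by
    cases w
    · exact absurd rfl hw
    · simp
  rcases hq : runW w with _ | _ | _ | _ | _ | _ | j | r <;> rw [hq] at hc hf hal <;>
    simp only [cost] at hc <;>
    simp only [SnF, Finset.mem_union, Finset.mem_insert, Finset.mem_singleton,
      Finset.mem_image, Finset.mem_range]
  · exact absurd rfl hf
  · tauto
  · tauto
  · rw [if_pos (by omega : 2 ≤ w.length)]
    simp
  · tauto
  · exact absurd rfl hal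
  · exact Or.inr (Or.inl ⟨j, by omega, rfl⟩)
  · exact Or.inr (Or.inr ⟨r, by omega, rfl⟩)

lemma SnF_card {n : ℕ} (h : 1 ≤ n) : (SnF n).card = 2 * n + 1 := by
  have hBsub : ∀ a ∈ (if 2 ≤ n then ({chi} : Finset St) else ∅), a = chi := by
    intro a ha
    split at ha
    · simpa using ha
    · simp at ha
  have hd3 : Disjoint ((Finset.range (n-1)).image del) ((Finset.range (n-2)).image pii) := by
    rw [Finset.disjoint_left]
    intro a ha hb
    simp only [Finset.mem_image, Finset.mem_range] at ha hb
    obtain ⟨j, _, rfl⟩ := ha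
    obtain ⟨r, _, hr⟩ := hb
    exact absurd hr (by simp)
  have hd2 : Disjoint ({phiE, phiU, alp} : Finset St) (if 2 ≤ n then {chi} else ∅) := by
    rw [Finset.disjoint_left]
    intro a ha hb
    have := hBsub a hb
    subst this
    simp at ha
  have hd1 : Disjoint (({phiE, phiU, alp} : Finset St) ∪ (if 2 ≤ n then {chi} else ∅))
      ((Finset.range (n-1)).image del ∪ (Finset.range (n-2)).image pii) := by
    rw [Finset.disjoint_left]
    intro a ha hb
    simp only [Finset.mem_union, Finset.mem_image, Finset.mem_range] at hb
    have ha2 : a = phiE ∨ a = phiU ∨ a = alp ∨ a = chi := by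
      simp only [Finset.mem_union, Finset.mem_insert, Finset.mem_singleton] at ha
      rcases ha with (h | h | h) | h
      · tauto
      · tauto
      · tauto
      · exact Or.inr (Or.inr (Or.inr (hBsub a h)))
    rcases hb with ⟨j, _, hj⟩ | ⟨r, _, hr⟩
    · rcases ha2 with rfl | rfl | rfl | rfl <;> simp at hj
    · rcases ha2 with rfl | rfl | rfl | rfl <;> simp at hr
  rw [SnF, Finset.card_union_of_disjoint hd1, Finset.card_union_of_disjoint hd2,
    Finset.card_union_of_disjoint hd3]
  rw [Finset.card_image_of_injective _ (fun a b hab => by injection hab),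
    Finset.card_image_of_injective _ (fun a b hab => by injection hab)]
  have h3 : (({phiE, phiU, alp} : Finset St)).card = 3 := by decide
  simp only [Finset.card_range, h3]
  rcases Nat.lt_or_ge n 2 with h2 | h2
  · rw [if_neg (by omega)]
    simp
    omega
  · rw [if_pos h2]
    simp
    omega

/-! ### canonical words realizing each state -/

lemma runW_repE_append (k : ℕ) (l : List Letter) :
    runW (List.replicate (k+1) E ++ l) = runFrom phiE l := by
  rw [runW, runFrom_append, run_free_repE (k+1) (by omega)]

lemma canon_phiE {n : ℕ} (h : 1 ≤ n) :
    ∃ w : List Letter, w.length = n ∧ runW w = phiE := by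
  exact ⟨List.replicate n E, by simp, run_free_repE n h⟩

lemma canon_phiU {n : ℕ} (h : 1 ≤ n) :
    ∃ w : List Letter, w.length = n ∧ runW w = phiU := by
  refine ⟨List.replicate (n-1) E ++ [U], by simp; omega, ?_⟩
  rcases Nat.eq_or_lt_of_le h with h1 | h1
  · simp [← h1, runW, step]
  · have : n - 1 = (n - 2) + 1 := by omega
    rw [this, runW_repE_append]
    simp [runFrom, step]

lemma canon_alp {n : ℕ} (h : 1 ≤ n) :
    ∃ w : List Letter, w.length = n ∧ runW w = alp := by
  exact ⟨List.replicate n D, by simp, run_free_repD n h⟩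

lemma canon_chi {n : ℕ} (h : 2 ≤ n) :
    ∃ w : List Letter, w.length = n ∧ runW w = chi := by
  refine ⟨List.replicate (n-2) E ++ [D, U], by simp; omega, ?_⟩
  rcases Nat.eq_or_lt_of_le h with h1 | h1
  · simp [← h1, runW, step]
  · have : n - 2 = (n - 3) + 1 := by omega
    rw [this, runW_repE_append]
    simp [runFrom, step]

lemma canon_del {n j : ℕ} (h : j + 2 ≤ n) :
    ∃ w : List Letter, w.length = n ∧ runW w = del j := by
  refine ⟨List.replicate (n-1-j) E ++ List.replicate (j+1) D, by simp; omega, ?_⟩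
  have : n - 1 - j = (n - 2 - j) + 1 := by omega
  rw [this, runW_repE_append]
  rw [show List.replicate (j+1) D = D :: List.replicate j D from rfl, runFrom_cons]
  simp only [step]
  rw [run_del_repD]
  congr 1
  omega

lemma canon_pii {n r : ℕ} (h : r + 3 ≤ n) :
    ∃ w : List Letter, w.length = n ∧ runW w = pii r := by
  obtain ⟨w, hlen, hrun⟩ := canon_del (n := n - 1) (j := r) (by omega)
  refine ⟨w ++ [E], by simp [hlen]; omega, ?_⟩
  rw [runW, runFrom_append]
  rw [runW] at hrun
  rw [hrun]
  simp [runFrom, step]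

end SubEx
namespace SubEx
open Letter St

def FSet (q : St) : Set (ℕ → Letter) := {s | aliveS q s}

lemma not_aliveS_of {q : St} {s : ℕ → Letter} (n : ℕ)
    (h : runFrom q (pre s n) = dd) : ¬ aliveS q s := fun ha => ha n h

/-- test sequences -/
def t1 : ℕ → Letter := constS E
def t2 : ℕ → Letter := constS U
def t3 : ℕ → Letter := consS D (consS U t1)
def t4 : ℕ → Letter := consS D (consS E t1)
def mixS : ℕ → (ℕ → Letter)
  | 0 => consS E t2
  | (k+1) => consS U (mixS k)
def t5 (j : ℕ) : ℕ → Letter := consS E (mixS j)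
def t6 : ℕ → Letter := consS E t2

/-! aliveness facts for t1 -/

lemma alive_t1 {q : St} (h : q = phiE ∨ q = phiU ∨ q = chi ∨ q = alp) : aliveS q t1 := by
  refine aliveS_of_inv (fun q' => q' = phiE ∨ q' = phiU ∨ q' = chi ∨ q' = alp)
    (by simp) h ?_
  rintro q' n (rfl | rfl | rfl | rfl) <;> simp [t1, constS, step]

lemma run_pii_repE (r : ℕ) : runFrom (pii r) (List.replicate (r+1) E) = dd := by
  induction r with
  | zero => simp [runFrom, step]
  | succ r ih =>
    rw [List.replicate_succ, runFrom_cons]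
    simpa [step] using ih

lemma dead_pii_t1 (r : ℕ) : ¬ aliveS (pii r) t1 := by
  apply not_aliveS_of (r+1)
  rw [show pre t1 (r+1) = List.replicate (r+1) E from pre_constS E (r+1)]
  exact run_pii_repE r

lemma dead_del_t1 (j : ℕ) : ¬ aliveS (del j) t1 := by
  apply not_aliveS_of (j+2)
  rw [show pre t1 (j+2) = List.replicate (j+2) E from pre_constS E (j+2)]
  rw [List.replicate_succ, runFrom_cons]
  simpa [step] using run_pii_repE j

/-! aliveness facts for t2 -/

lemma alive_t2 {q : St} (h : q = phiE ∨ q = phiU ∨ ∃ r, q = pii r) : aliveS q t2 := by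
  refine aliveS_of_inv (fun q' => q' = phiE ∨ q' = phiU ∨ ∃ r, q' = pii r) (by simp) h ?_
  rintro q' n (rfl | rfl | ⟨r, rfl⟩)
  · simp [t2, constS, step]
  · simp [t2, constS, step]
  · cases r <;> simp [t2, constS, step]

lemma dead_chi_t2 : ¬ aliveS chi t2 := by
  apply not_aliveS_of 1
  rw [show pre t2 1 = [U] from by rw [t2, pre_constS]; rfl]
  simp [runFrom, step]

lemma dead_alp_t2 : ¬ aliveS alp t2 := by
  apply not_aliveS_of 2
  rw [show pre t2 2 = [U, U] from by rw [t2, pre_constS]; rfl]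
  simp [runFrom, step]

lemma dead_del_t2 (j : ℕ) : ¬ aliveS (del j) t2 := by
  apply not_aliveS_of 2
  rw [show pre t2 2 = [U, U] from by rw [t2, pre_constS]; rfl]
  simp [runFrom, step]

/-! aliveness facts for t3 = D U E^∞ -/

lemma alive_t3 {q : St} (h : q = phiE ∨ q = alp ∨ ∃ j, q = del j) : aliveS q t3 := by
  rw [t3, aliveS_consS]
  rcases h with rfl | rfl | ⟨j, rfl⟩ <;>
    refine ⟨by simp, ?_⟩ <;>
    simp only [step] <;>
    (rw [aliveS_consS]; exact ⟨by simp, by simp only [step]; exact alive_t1 (by tauto)⟩)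

lemma dead_phiU_t3 : ¬ aliveS phiU t3 := by
  apply not_aliveS_of 1
  rw [show pre t3 1 = [D] from by rw [t3, show (1:ℕ) = 0+1 from rfl, pre_consS]; rfl]
  simp [runFrom, step]

lemma dead_chi_t3 : ¬ aliveS chi t3 := by
  apply not_aliveS_of 1
  rw [show pre t3 1 = [D] from by rw [t3, show (1:ℕ) = 0+1 from rfl, pre_consS]; rfl]
  simp [runFrom, step]

lemma dead_pii_t3 (r : ℕ) : ¬ aliveS (pii r) t3 := by
  apply not_aliveS_of 1
  rw [show pre t3 1 = [D] from by rw [t3, show (1:ℕ) = 0+1 from rfl, pre_consS]; rfl]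
  cases r <;> simp [runFrom, step]

/-! aliveness facts for t4 = D E E^∞ -/

lemma alive_alp_t4 : aliveS alp t4 := by
  rw [t4, aliveS_consS]
  refine ⟨by simp, ?_⟩
  simp only [step]
  rw [aliveS_consS]
  exact ⟨by simp, by simp only [step]; exact alive_t1 (by tauto)⟩

lemma dead_phiE_t4 : ¬ aliveS phiE t4 := by
  apply not_aliveS_of 3
  rw [show pre t4 3 = [D, E, E] from by
    rw [t4, show (3:ℕ) = 2+1 from rfl, pre_consS, show (2:ℕ) = 1+1 from rfl, pre_consS, t1, pre_constS]
    rfl]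
  simp [runFrom, step]

/-! mixS facts -/

lemma dead_pii_mix (k : ℕ) : ¬ aliveS (pii k) (mixS k) := by
  induction k with
  | zero =>
    apply not_aliveS_of 1
    rw [show pre (mixS 0) 1 = [E] from by rw [mixS, show (1:ℕ) = 0+1 from rfl, pre_consS]; rfl]
    simp [runFrom, step]
  | succ k ih =>
    rw [mixS, aliveS_consS]
    rintro ⟨-, h⟩
    rw [show step (pii (k+1)) U = pii k from by simp [step]] at h
    exact ih h

lemma alive_phiU_mix (k : ℕ) : aliveS phiU (mixS k) := by
  induction k with
  | zero =>
    rw [mixS, aliveS_consS]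
    exact ⟨by simp, by simp only [step]; exact alive_t2 (by tauto)⟩
  | succ k ih =>
    rw [mixS, aliveS_consS]
    exact ⟨by simp, by simpa [step] using ih⟩

lemma alive_pii_mix : ∀ (k k' : ℕ), k' ≠ k → aliveS (pii k') (mixS k) := by
  intro k
  induction k with
  | zero =>
    intro k' hk
    rcases k' with _ | k'
    · exact absurd rfl hk
    · rw [mixS, aliveS_consS]
      refine ⟨by simp, ?_⟩
      rw [show step (pii (k'+1)) E = pii k' from by simp [step]]
      exact alive_t2 (by tauto)
  | succ k ih =>
    intro k' hk
    rcases k' with _ | k'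
    · rw [mixS, aliveS_consS]
      refine ⟨by simp, ?_⟩
      rw [show step (pii 0) U = phiU from by simp [step]]
      exact alive_phiU_mix k
    · rw [mixS, aliveS_consS]
      refine ⟨by simp, ?_⟩
      rw [show step (pii (k'+1)) U = pii k' from by simp [step]]
      exact ih k' (by omega)

/-! t5 facts -/

lemma dead_del_t5 (j : ℕ) : ¬ aliveS (del j) (t5 j) := by
  rw [t5, aliveS_consS]
  rintro ⟨-, h⟩
  rw [show step (del j) E = pii j from by simp [step]] at h
  exact dead_pii_mix j h

lemma alive_del_t5 {j j' : ℕ} (h : j' ≠ j) : aliveS (del j') (t5 j) := by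
  rw [t5, aliveS_consS]
  refine ⟨by simp, ?_⟩
  rw [show step (del j') E = pii j' from by simp [step]]
  exact alive_pii_mix j j' h

lemma dead_pii_t5 (j : ℕ) : ¬ aliveS (pii (j+1)) (t5 j) := by
  rw [t5, aliveS_consS]
  rintro ⟨-, h⟩
  rw [show step (pii (j+1)) E = pii j from by simp [step]] at h
  exact dead_pii_mix j h

lemma alive_pii_t5 {j k : ℕ} (h : k ≠ j) : aliveS (pii (k+1)) (t5 j) := by
  rw [t5, aliveS_consS]
  refine ⟨by simp, ?_⟩
  rw [show step (pii (k+1)) E = pii k from by simp [step]]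
  exact alive_pii_mix j k h

/-! t6 facts -/

lemma dead_pii0_t6 : ¬ aliveS (pii 0) t6 := by
  apply not_aliveS_of 1
  rw [show pre t6 1 = [E] from by rw [t6, show (1:ℕ) = 0+1 from rfl, pre_consS]; rfl]
  simp [runFrom, step]

lemma alive_pii_t6 (k : ℕ) : aliveS (pii (k+1)) t6 := by
  rw [t6, aliveS_consS]
  refine ⟨by simp, ?_⟩
  rw [show step (pii (k+1)) E = pii k from by simp [step]]
  exact alive_t2 (by tauto)

/-! ### injectivity of `FSet` on meaningful states -/

lemma FSet_ne_of {q q' : St} (s : ℕ → Letter) (h1 : aliveS q s) (h2 : ¬ aliveS q' s) :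
    FSet q ≠ FSet q' := by
  intro h
  apply h2
  have hmem : s ∈ FSet q := h1
  rw [h] at hmem
  exact hmem

lemma FSet_inj {q q' : St} (hq : q ≠ dd ∧ q ≠ free) (hq' : q' ≠ dd ∧ q' ≠ free)
    (h : FSet q = FSet q') : q = q' := by
  by_contra hne
  rcases q with _ | _ | _ | _ | _ | _ | j | r <;> rcases q' with _ | _ | _ | _ | _ | _ | j' | r'
  -- eliminate free/dd cases
  all_goals first
    | exact hq.2 rfl
    | exact hq.1 rfl
    | exact hq'.2 rfl
    | exact hq'.1 rfl
    | exact hne rfl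
    | skip
  -- phiE vs phiU
  · exact (FSet_ne_of t3 (alive_t3 (by tauto)) dead_phiU_t3) h
  -- phiE vs chi
  · exact (FSet_ne_of t2 (alive_t2 (by tauto)) dead_chi_t2) h
  -- phiE vs alp
  · exact (FSet_ne_of t4 alive_alp_t4 dead_phiE_t4) h.symm
  -- phiE vs del j'
  · exact (FSet_ne_of t1 (alive_t1 (by tauto)) (dead_del_t1 j')) h
  -- phiE vs pii r'
  · exact (FSet_ne_of t1 (alive_t1 (by tauto)) (dead_pii_t1 r')) h
  -- phiU vs phiE
  · exact (FSet_ne_of t3 (alive_t3 (by tauto)) dead_phiU_t3) h.symm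
  -- phiU vs chi
  · exact (FSet_ne_of t2 (alive_t2 (by tauto)) dead_chi_t2) h
  -- phiU vs alp
  · exact (FSet_ne_of t2 (alive_t2 (by tauto)) dead_alp_t2) h
  -- phiU vs del
  · exact (FSet_ne_of t1 (alive_t1 (by tauto)) (dead_del_t1 j')) h
  -- phiU vs pii
  · exact (FSet_ne_of t1 (alive_t1 (by tauto)) (dead_pii_t1 r')) h
  -- chi vs phiE
  · exact (FSet_ne_of t2 (alive_t2 (by tauto)) dead_chi_t2) h.symm
  -- chi vs phiU
  · exact (FSet_ne_of t2 (alive_t2 (by tauto)) dead_chi_t2) h.symm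
  -- chi vs alp
  · exact (FSet_ne_of t3 (alive_t3 (by tauto)) dead_chi_t3) h.symm
  -- chi vs del
  · exact (FSet_ne_of t1 (alive_t1 (by tauto)) (dead_del_t1 j')) h
  -- chi vs pii
  · exact (FSet_ne_of t1 (alive_t1 (by tauto)) (dead_pii_t1 r')) h
  -- alp vs phiE
  · exact (FSet_ne_of t4 alive_alp_t4 dead_phiE_t4) h
  -- alp vs phiU
  · exact (FSet_ne_of t2 (alive_t2 (by tauto)) dead_alp_t2) h.symm
  -- alp vs chi
  · exact (FSet_ne_of t3 (alive_t3 (by tauto)) dead_chi_t3) h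
  -- alp vs del
  · exact (FSet_ne_of t1 (alive_t1 (by tauto)) (dead_del_t1 j')) h
  -- alp vs pii
  · exact (FSet_ne_of t1 (alive_t1 (by tauto)) (dead_pii_t1 r')) h
  -- del j vs phiE
  · exact (FSet_ne_of t1 (alive_t1 (by tauto)) (dead_del_t1 j)) h.symm
  -- del j vs phiU
  · exact (FSet_ne_of t1 (alive_t1 (by tauto)) (dead_del_t1 j)) h.symm
  -- del j vs chi
  · exact (FSet_ne_of t1 (alive_t1 (by tauto)) (dead_del_t1 j)) h.symm
  -- del j vs alp
  · exact (FSet_ne_of t1 (alive_t1 (by tauto)) (dead_del_t1 j)) h.symm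
  -- del j vs del j'
  · have hjj : j' ≠ j := fun hh => hne (by rw [hh])
    exact (FSet_ne_of (t5 j) (alive_del_t5 hjj) (dead_del_t5 j)) h.symm
  -- del j vs pii r'
  · exact (FSet_ne_of t3 (alive_t3 (by tauto)) (dead_pii_t3 r')) h
  -- pii r vs phiE
  · exact (FSet_ne_of t1 (alive_t1 (by tauto)) (dead_pii_t1 r)) h.symm
  -- pii r vs phiU
  · exact (FSet_ne_of t1 (alive_t1 (by tauto)) (dead_pii_t1 r)) h.symm
  -- pii r vs chi
  · exact (FSet_ne_of t1 (alive_t1 (by tauto)) (dead_pii_t1 r)) h.symm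
  -- pii r vs alp
  · exact (FSet_ne_of t1 (alive_t1 (by tauto)) (dead_pii_t1 r)) h.symm
  -- pii r vs del j'
  · exact (FSet_ne_of t3 (alive_t3 (by tauto)) (dead_pii_t3 r)) h.symm
  -- pii r vs pii r'
  · rcases r with _ | k
    · rcases r' with _ | k'
      · exact hne rfl
      · exact (FSet_ne_of t6 (alive_pii_t6 k') dead_pii0_t6) h.symm
    · rcases r' with _ | k'
      · exact (FSet_ne_of t6 (alive_pii_t6 k) dead_pii0_t6) h
      · have hkk : k' ≠ k := fun hh => hne (by rw [hh])
        exact (FSet_ne_of (t5 k) (alive_pii_t5 hkk) (dead_pii_t5 k)) h.symm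

end SubEx
namespace SubEx
open Letter St

lemma SnF_ok {n : ℕ} {q : St} (hq : q ∈ SnF n) : q ≠ dd ∧ q ≠ free := by
  simp only [SnF, Finset.mem_union, Finset.mem_insert, Finset.mem_singleton,
    Finset.mem_image, Finset.mem_range] at hq
  rcases hq with (h | h) | (⟨j, _, rfl⟩ | ⟨r, _, rfl⟩)
  · rcases h with rfl | rfl | rfl <;> simp
  · split at h
    · rw [Finset.mem_singleton] at h
      subst h
      simp
    · simp at h
  · simp
  · simp

lemma followerSets_eq {n : ℕ} (h : 1 ≤ n) :
    FollowerSets XS n = FSet '' ↑(SnF n) := by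
  ext F
  constructor
  · rintro ⟨w, hlen, hlang, hfol⟩
    have hw : w ≠ [] := by
      intro hh
      rw [hh] at hlen
      simp at hlen
      omega
    have hal : runW w ≠ dd := (inLang_iff hw).mp hlang
    refine ⟨runW w, ?_, ?_⟩
    · rw [← hlen]
      exact_mod_cast state_mem_SnF hw hal
    · rw [← hfol, follower_eq hw]
      rfl
  · rintro ⟨q, hq, rfl⟩
    rw [Finset.mem_coe] at hq
    have hok := SnF_ok hq
    simp only [SnF, Finset.mem_union, Finset.mem_insert, Finset.mem_singleton,
      Finset.mem_image, Finset.mem_range] at hq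
    have key : ∃ w : List Letter, w.length = n ∧ runW w = q := by
      rcases hq with (hcase | hcase) | (⟨j, hj, rfl⟩ | ⟨r, hr, rfl⟩)
      · rcases hcase with rfl | rfl | rfl
        · exact canon_phiE h
        · exact canon_phiU h
        · exact canon_alp h
      · split at hcase
        · rw [Finset.mem_singleton] at hcase
          subst hcase
          rename_i h2
          exact canon_chi h2
        · simp at hcase
      · exact canon_del (by omega)
      · exact canon_pii (by omega)
    obtain ⟨w, hlen, hrun⟩ := key
    have hw : w ≠ [] := by
      intro hh
      rw [hh] at hlen
      simp at hlen
      omega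
    refine ⟨w, hlen, ?_, ?_⟩
    · exact (inLang_iff hw).mpr (by rw [hrun]; exact hok.1)
    · rw [follower_eq hw, hrun]
      rfl

lemma followerSets_ncard {n : ℕ} (h : 1 ≤ n) :
    (FollowerSets XS n).ncard = 2 * n + 1 := by
  rw [followerSets_eq h, Set.ncard_image_of_injOn, Set.ncard_coe_finset]
  · exact SnF_card h
  · intro q hq q' hq' hEq
    exact FSet_inj (SnF_ok (Finset.mem_coe.mp hq)) (SnF_ok (Finset.mem_coe.mp hq')) hEq

end SubEx
namespace SubEx
open Letter St

/-- the bit words: `U` for true, `E` for false -/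
def wb {n : ℕ} (b : Fin n → Bool) : List Letter :=
  List.ofFn fun i => if b i then U else E

@[simp] lemma wb_length {n : ℕ} (b : Fin n → Bool) : (wb b).length = n := by simp [wb]

lemma wb_noD {n : ℕ} (b : Fin n → Bool) : ∀ a ∈ wb b, a ≠ D := by
  intro a ha
  simp only [wb, List.mem_ofFn] at ha
  obtain ⟨i, hi⟩ := ha
  cases hb : b i <;> simp [hb] at hi <;> simp [← hi]

lemma run_noD {l : List Letter} (hl : ∀ a ∈ l, a ≠ D) :
    ∀ {q : St}, (q = free ∨ q = phiE ∨ q = phiU) →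
      (runFrom q l = free ∨ runFrom q l = phiE ∨ runFrom q l = phiU) := by
  induction l with
  | nil => intro q hq; simpa using hq
  | cons a tl ih =>
    intro q hq
    have ha : a ≠ D := hl a (by simp)
    have hl' : ∀ a ∈ tl, a ≠ D := fun x hx => hl x (by simp [hx])
    rw [runFrom_cons]
    apply ih hl'
    rcases hq with rfl | rfl | rfl <;> cases a <;> simp [step] at ha ⊢
    all_goals tauto

lemma run_noD_ne_dd {l : List Letter} (hl : ∀ a ∈ l, a ≠ D) {q : St}
    (hq : q = free ∨ q = phiE ∨ q = phiU) : runFrom q l ≠ dd := by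
  rcases run_noD hl hq with h | h | h <;> rw [h] <;> simp

lemma run_pii_noD : ∀ (l : List Letter), (∀ a ∈ l, a ≠ D) → ∀ (r : ℕ) (hr : r < l.length),
    (l.get ⟨r, hr⟩ = E → runFrom (pii r) l = dd) ∧
    (l.get ⟨r, hr⟩ = U → runFrom (pii r) l ≠ dd) := by
  intro l
  induction l with
  | nil => intro _ r hr; simp at hr
  | cons a tl ih =>
    intro hl r hr
    have ha : a ≠ D := hl a (by simp)
    have hl' : ∀ x ∈ tl, x ≠ D := fun x hx => hl x (by simp [hx])
    rcases r with _ | r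
    · constructor
      · intro hE
        simp only [List.get] at hE
        subst hE
        simp [step]
      · intro hU
        simp only [List.get] at hU
        subst hU
        rw [runFrom_cons, show step (pii 0) U = phiU from rfl]
        exact run_noD_ne_dd hl' (by tauto)
    · have hstep : step (pii (r+1)) a = pii r := by
        cases a <;> simp [step] at ha ⊢
      rw [runFrom_cons, hstep]
      have hr' : r < tl.length := by simpa using hr
      have := ih hl' r hr'
      simpa using this

/-- the distinguishing left sequences -/
def pl (l : ℕ) : ℕ → Letter :=
  fun k => if k = 0 then E else if k ≤ l then D else if k = l + 1 then E else U

lemma pwin_pl_low {l m : ℕ} (h1 : 1 ≤ m) (h2 : m ≤ l + 1) :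
    pwin (pl l) m = List.replicate (m-1) D ++ [E] := by
  induction m with
  | zero => omega
  | succ m ih =>
    rcases Nat.eq_or_lt_of_le h1 with h3 | h3
    · rw [← h3]
      rw [pwin_succ]
      simp [pl]
    · have hm : 1 ≤ m := by omega
      rw [pwin_succ, ih hm (by omega)]
      have hpm : pl l m = D := by
        rw [pl]
        rw [if_neg (by omega), if_pos (by omega)]
      rw [hpm]
      rw [show (m + 1 - 1) = (m - 1) + 1 from by omega, List.replicate_succ]
      rfl

lemma pwin_pl_high {l m : ℕ} (hl : 1 ≤ l) (h : l + 2 ≤ m) :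
    pwin (pl l) m = List.replicate (m-l-2) U ++ (E :: (List.replicate l D ++ [E])) := by
  induction m, h using Nat.le_induction with
  | base =>
    rw [pwin_succ, pwin_pl_low (by omega) (by omega)]
    have : pl l (l + 1) = E := by
      rw [pl, if_neg (by omega), if_neg (by omega), if_pos rfl]
    rw [this]
    simp
  | succ m hm ih =>
    rw [pwin_succ, ih]
    have : pl l m = U := by
      rw [pl, if_neg (by omega), if_neg (by omega), if_neg (by omega)]
    rw [this]
    rw [show m + 1 - l - 2 = (m - l - 2) + 1 from by omega, List.replicate_succ]
    rfl

lemma runW_repD_E (k : ℕ) : runW (List.replicate k D ++ [E]) = phiE := by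
  rcases k with _ | k
  · simp [runW, runFrom, step]
  · rw [runW, runFrom_append, run_free_repD (k+1) (by omega)]
    simp [runFrom, step]

lemma run_phiE_DlE {l : ℕ} (hl : 1 ≤ l) :
    runFrom phiE (List.replicate l D ++ [E]) = pii (l - 1) := by
  rcases l with _ | j
  · omega
  have h0 : runFrom phiE (List.replicate (j+1) D) = del j := by
    rw [show List.replicate (j+1) D = D :: List.replicate j D from rfl, runFrom_cons,
      show step phiE D = del 0 from rfl, run_del_repD]
    simp
  rw [runFrom_append, h0]
  simp [runFrom, step]

lemma runW_EDlE {l : ℕ} (hl : 1 ≤ l) :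
    runW (E :: (List.replicate l D ++ [E])) = pii (l - 1) := by
  rw [runW, runFrom_cons, show step free E = phiE from rfl]
  exact run_phiE_DlE hl

lemma runW_repU_E (a : ℕ) (z : List Letter) :
    runW (List.replicate a U ++ (E :: z)) = runFrom phiE z := by
  rcases a with _ | a
  · simp [runFrom, step]
  · rw [runW, runFrom_append, run_free_repU (a+1) (by omega)]
    simp [runFrom, step]

/-- membership of `pl l` in the predecessor set of `wb b` is the `l`-th bit -/
lemma pl_mem_iff {n : ℕ} (hn : 1 ≤ n) (b : Fin n → Bool) {l : ℕ} (h1 : 1 ≤ l) (h2 : l ≤ n) :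
    pl l ∈ Predecessor XS (wb b) ↔ b ⟨l - 1, by omega⟩ = true := by
  have hwb : wb b ≠ [] := by
    intro hh
    have := wb_length b
    rw [hh] at this
    simp at this
    omega
  have hget : (wb b).get ⟨l - 1, by simp; omega⟩ = (if b ⟨l-1, by omega⟩ then U else E) := by
    simp [wb]
  rw [predecessor_eq hwb]
  constructor
  · intro hp
    by_contra hb
    have hb' : b ⟨l-1, by omega⟩ = false := by simpa using hb
    have hm := hp (l + 2)
    rw [pwin_pl_high h1 (by omega)] at hm
    rw [show l + 2 - l - 2 = 0 from by omega] at hm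
    simp only [List.replicate_zero, List.nil_append] at hm
    rw [show (E :: (List.replicate l D ++ [E])) ++ wb b
        = (E :: (List.replicate l D ++ [E])) ++ wb b from rfl] at hm
    rw [runW, runFrom_append] at hm
    rw [show runFrom free (E :: (List.replicate l D ++ [E])) = runW (E :: (List.replicate l D ++ [E])) from rfl] at hm
    rw [runW_EDlE h1] at hm
    have hdead := (run_pii_noD (wb b) (wb_noD b) (l-1) (by simp; omega)).1
      (by rw [hget, hb']; rfl)
    exact hm hdead
  · intro hb m
    rcases Nat.eq_zero_or_pos m with rfl | hm
    · simp only [pwin_zero, List.nil_append]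
      exact run_noD_ne_dd (wb_noD b) (by tauto)
    rcases le_or_gt m (l+1) with hm2 | hm2
    · rw [pwin_pl_low hm hm2, runW, runFrom_append]
      rw [show runFrom free (List.replicate (m-1) D ++ [E]) = runW (List.replicate (m-1) D ++ [E]) from rfl]
      rw [runW_repD_E]
      exact run_noD_ne_dd (wb_noD b) (by tauto)
    · rw [pwin_pl_high h1 (by omega), List.append_assoc]
      have hcons : (E :: (List.replicate l D ++ [E])) ++ wb b
          = E :: ((List.replicate l D ++ [E]) ++ wb b) := rfl
      rw [hcons, runW, runFrom_append, runFrom_cons]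
      have hU : step (runFrom free (List.replicate (m-l-2) U)) E = phiE := by
        rcases Nat.eq_zero_or_pos (m-l-2) with h0 | h0
        · rw [h0]
          rfl
        · rw [run_free_repU _ h0]
          rfl
      rw [hU, runFrom_append, run_phiE_DlE h1]
      exact (run_pii_noD (wb b) (wb_noD b) (l-1) (by simp; omega)).2
        (by rw [hget, hb]; rfl)

end SubEx
namespace SubEx
open Letter St

lemma wb_ne_nil {n : ℕ} (hn : 1 ≤ n) (b : Fin n → Bool) : wb b ≠ [] := by
  intro hh
  have := wb_length b
  rw [hh] at this
  simp at this
  omega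

lemma wb_inLang {n : ℕ} (hn : 1 ≤ n) (b : Fin n → Bool) : InLang XS (wb b) :=
  (inLang_iff (wb_ne_nil hn b)).mpr (run_noD_ne_dd (wb_noD b) (by tauto))

lemma pred_inj {n : ℕ} (hn : 1 ≤ n) :
    Function.Injective (fun b : Fin n → Bool => Predecessor XS (wb b)) := by
  intro b b' h
  simp only at h
  funext i
  have hi1 : 1 ≤ (i : ℕ) + 1 := by omega
  have hi2 : (i : ℕ) + 1 ≤ n := by omega
  have h1 := pl_mem_iff hn b hi1 hi2
  have h2 := pl_mem_iff hn b' hi1 hi2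
  rw [h] at h1
  have hidx : (⟨(i : ℕ) + 1 - 1, by omega⟩ : Fin n) = i := by
    apply Fin.ext
    simp
  rw [hidx] at h1 h2
  rw [h2] at h1
  cases hb : b i <;> cases hb' : b' i <;> rw [hb, hb'] at h1 <;> simp at h1 <;> rfl

lemma predSets_finite (n : ℕ) : (PredecessorSets XS n).Finite := by
  apply Set.Finite.subset ((List.finite_length_eq Letter n).image (fun w => Predecessor XS w))
  rintro P ⟨w, hl, _, rfl⟩
  exact ⟨w, hl, rfl⟩

lemma pred_count {n : ℕ} (hn : 1 ≤ n) : 2 ^ n ≤ (PredecessorSets XS n).ncard := by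
  have hsub : Set.range (fun b : Fin n → Bool => Predecessor XS (wb b)) ⊆
      PredecessorSets XS n := by
    rintro P ⟨b, rfl⟩
    exact ⟨wb b, by simp, wb_inLang hn b, rfl⟩
  have hr : (Set.range (fun b : Fin n → Bool => Predecessor XS (wb b))).ncard = 2 ^ n := by
    rw [← Set.image_univ, Set.ncard_image_of_injective _ (pred_inj hn), Set.ncard_univ,
      Nat.card_eq_fintype_card]
    rw [Fintype.card_fun]
    simp
  rw [← hr]
  exact Set.ncard_le_ncard hsub (predSets_finite n)

end SubEx


/-- There is a subshift over the three-letter alphabet `{D, U, E}` with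
`|F_X(n)| = 2n + 1` for all `n ≥ 1` and `|P_X(n)| ≥ 2^{⌊n/4⌋}` for all `n > 6`. -/
theorem exists_subshift_linear_followers_exp_predecessors :
    ∃ X : Set (ℤ → Letter), IsSubshift X ∧
      (∀ n : ℕ, 1 ≤ n → (FollowerSets X n).ncard = 2 * n + 1) ∧
      (∀ n : ℕ, 6 < n → 2 ^ (n / 4) ≤ (PredecessorSets X n).ncard) := by
  refine ⟨SubEx.XS, SubEx.isSubshift_XS, fun n hn => SubEx.followerSets_ncard hn, fun n hn => ?_⟩
  calc 2 ^ (n / 4) ≤ 2 ^ n := Nat.pow_le_pow_right (by norm_num) (Nat.div_le_self n 4)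
    _ ≤ _ := SubEx.pred_count (by omega)
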